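/- If F satisfies the WDVV equations with respect to the constant invertible symmetric matrix η_{ij} = ∂_{r-1}∂_i∂_j F, then at each point t the product ∂_i ∘ ∂_j = ∑_k C_{ij}^k(t) ∂_k with C_{ij}^k = ∑_p η^{kp} ∂_p∂_i∂_j F is commutative and associative, and together with η and unit e = ∂_{r-1} gives each tangent space the structure of a Frobenius algebra. -/

import Mathlib

open Finset

/-- Partial derivative in the `i`-th coordinate direction. -/
noncomputable def pd {r : ℕ} (i : Fin r) (f : (Fin r → ℝ) → ℝ) : (Fin r → ℝ) → ℝ :=
  fun t => fderiv ℝ f t (Pi.single i 1)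

/-- The WDVV equations for `F` with respect to a matrix with inverse entries `ηinv`. -/
def WDVV {r : ℕ} (F : (Fin r → ℝ) → ℝ) (ηinv : Matrix (Fin r) (Fin r) ℝ) : Prop :=
  ∀ (i j q n : Fin r) (t : Fin r → ℝ),
    ∑ k, ∑ p, pd i (pd j (pd k F)) t * ηinv k p * pd p (pd q (pd n F)) t
      = ∑ k, ∑ p, pd n (pd j (pd k F)) t * ηinv k p * pd p (pd q (pd i F)) t

lemma pd_contDiff {r : ℕ} (i : Fin r) {f : (Fin r → ℝ) → ℝ} (hf : ContDiff ℝ (⊤ : ℕ∞) f) :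
    ContDiff ℝ (⊤ : ℕ∞) (pd i f) := by
  have h1 : ContDiff ℝ (⊤ : ℕ∞) (fderiv ℝ f) := hf.fderiv_right (by simp)
  exact h1.clm_apply contDiff_const

lemma pd_comm {r : ℕ} (i j : Fin r) {f : (Fin r → ℝ) → ℝ} (hf : ContDiff ℝ (⊤ : ℕ∞) f)
    (t : Fin r → ℝ) : pd i (pd j f) t = pd j (pd i f) t := by
  have hsym : IsSymmSndFDerivAt ℝ f t := by
    apply ContDiffAt.isSymmSndFDerivAt hf.contDiffAt
    rw [minSmoothness_of_isRCLikeNormedField]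
    exact WithTop.coe_le_coe.mpr (le_top : (2 : ℕ∞) ≤ ⊤)
  have key : ∀ (a b : Fin r), pd a (pd b f) t
      = fderiv ℝ (fderiv ℝ f) t (Pi.single a 1) (Pi.single b 1) := by
    intro a b
    have hdf : DifferentiableAt ℝ (fderiv ℝ f) t :=
      (hf.fderiv_right (m := (⊤ : ℕ∞)) (by simp)).differentiable (by simp) t
    show fderiv ℝ (fun s => fderiv ℝ f s (Pi.single b 1)) t (Pi.single a 1) = _
    rw [fderiv_clm_apply hdf (differentiableAt_const _)]
    simp
  rw [key i j, key j i, hsym]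

lemma sum_rot {α : Type*} [Fintype α] {M : Type*} [AddCommMonoid M]
    (f : α → α → α → M) :
    ∑ k, ∑ p, ∑ s, f k p s = ∑ s, ∑ k, ∑ p, f k p s :=
  (Finset.sum_congr rfl fun _ _ => Finset.sum_comm).trans Finset.sum_comm

/-- If `F` satisfies the WDVV equations with respect to the constant invertible matrix
`η i j = ∂_u ∂_i ∂_j F`, then at each point the product `∂_i ∘ ∂_j = ∑ k, C i j k • ∂_k`
with `C i j k = ∑ p, η⁻¹ k p * ∂_p ∂_i ∂_j F` is commutative and associative, `∂_u` is a
unit, and `η` is invariant: each tangent space is a Frobenius algebra. -/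
theorem wdvv_gives_frobenius_algebra {r : ℕ} (F : (Fin r → ℝ) → ℝ) (hF : ContDiff ℝ (⊤ : ℕ∞) F)
    (u : Fin r) (η : Matrix (Fin r) (Fin r) ℝ)
    (hη : ∀ (i j : Fin r) (t : Fin r → ℝ), η i j = pd u (pd i (pd j F)) t)
    (hηinv : IsUnit η.det)
    (hwdvv : WDVV F η⁻¹)
    (C : Fin r → Fin r → Fin r → (Fin r → ℝ) → ℝ)
    (hC : ∀ (i j k : Fin r) (t : Fin r → ℝ),
      C i j k t = ∑ p, η⁻¹ k p * pd p (pd i (pd j F)) t) :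
    -- commutativity
    (∀ (i j k : Fin r) (t : Fin r → ℝ), C i j k t = C j i k t) ∧
    -- associativity: (∂_i ∘ ∂_j) ∘ ∂_n = ∂_i ∘ (∂_j ∘ ∂_n)
    (∀ (i j n m : Fin r) (t : Fin r → ℝ),
      ∑ k, C i j k t * C k n m t = ∑ k, C j n k t * C i k m t) ∧
    -- unity
    (∀ (i k : Fin r) (t : Fin r → ℝ), C i u k t = if i = k then 1 else 0) ∧
    -- η is symmetric and invariant for the product
    η.IsSymm ∧
    (∀ (i j l : Fin r) (t : Fin r → ℝ),
      ∑ k, C i j k t * η k l = ∑ k, C j l k t * η k i) := by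
  -- symmetry of third derivatives
  have s12 : ∀ (a b c : Fin r) (t : Fin r → ℝ),
      pd a (pd b (pd c F)) t = pd b (pd a (pd c F)) t :=
    fun a b c t => pd_comm a b (pd_contDiff c hF) t
  have s23 : ∀ (a b c : Fin r) (t : Fin r → ℝ),
      pd a (pd b (pd c F)) t = pd a (pd c (pd b F)) t :=
    fun a b c t => congrArg (fun g => pd a g t) (funext (pd_comm b c hF))
  have s13 : ∀ (a b c : Fin r) (t : Fin r → ℝ),
      pd a (pd b (pd c F)) t = pd c (pd b (pd a F)) t := by
    intro a b c t; rw [s12, s23, s12]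
  -- symmetry of η
  have hsy : ∀ a b, η a b = η b a := by
    intro a b; rw [hη a b 0, hη b a 0, s23]
  have hηsymm : η.IsSymm := by
    ext a b; simp only [Matrix.transpose_apply]; exact (hsy a b).symm
  -- symmetry of η⁻¹
  have hinvsy : ∀ a b, η⁻¹ a b = η⁻¹ b a := by
    intro a b
    have h : (η⁻¹).transpose = η⁻¹ := by rw [Matrix.transpose_nonsing_inv, hηsymm.eq]
    conv_lhs => rw [← h]
    exact Matrix.transpose_apply _ _ _
  have hmul : η⁻¹ * η = 1 := Matrix.nonsing_inv_mul η hηinv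
  have hmul' : η * η⁻¹ = 1 := Matrix.mul_nonsing_inv η hηinv
  refine ⟨?_, ?_, ?_, hηsymm, ?_⟩
  · -- commutativity
    intro i j k t
    rw [hC, hC]
    exact Finset.sum_congr rfl fun p _ => by rw [s23 p i j]
  · -- associativity
    intro i j n m t
    have key : ∀ (a b c : Fin r),
        ∑ k, C a b k t * C k c m t
          = ∑ s, η⁻¹ m s * ∑ k, ∑ p,
              pd a (pd b (pd k F)) t * η⁻¹ k p * pd p (pd s (pd c F)) t := by
      intro a b c
      simp_rw [hC, Finset.sum_mul, Finset.mul_sum]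
      rw [sum_rot]
      refine Finset.sum_congr rfl fun s _ => ?_
      rw [Finset.sum_comm]
      refine Finset.sum_congr rfl fun k _ => Finset.sum_congr rfl fun p _ => ?_
      rw [hinvsy p k, s12 k a b, s23 a k b, s12 s p c]
      ring
    have hswap : ∑ k, C j n k t * C i k m t = ∑ k, C j n k t * C k i m t := by
      refine Finset.sum_congr rfl fun k _ => ?_
      rw [hC i k m, hC k i m]
      exact congrArg _ (Finset.sum_congr rfl fun p _ => by rw [s23 p i k])
    rw [key i j n, hswap, key j n i]
    refine Finset.sum_congr rfl fun s _ => ?_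
    rw [hwdvv i j s n t]
    refine congrArg _ (Finset.sum_congr rfl fun k _ => Finset.sum_congr rfl fun p _ => ?_)
    rw [s12 n j k]
  · -- unity
    intro i k t
    rw [hC]
    have h1 : ∀ p, pd p (pd i (pd u F)) t = η p i := by
      intro p; rw [hη p i t, s12 u p i, s23 p u i]
    simp_rw [h1]
    have h2 : ∑ p, η⁻¹ k p * η p i = (η⁻¹ * η) k i := (Matrix.mul_apply).symm
    rw [h2, hmul, Matrix.one_apply]
    simp [eq_comm]
  · -- invariance
    intro i j l t
    have key : ∀ (a b c : Fin r), ∑ k, C a b k t * η k c = pd c (pd a (pd b F)) t := by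
      intro a b c
      simp_rw [hC, Finset.sum_mul]
      rw [Finset.sum_comm]
      have h1 : ∀ p, ∑ k, η⁻¹ k p * pd p (pd a (pd b F)) t * η k c
          = (η * η⁻¹) c p * pd p (pd a (pd b F)) t := by
        intro p
        rw [Matrix.mul_apply, Finset.sum_mul]
        exact Finset.sum_congr rfl fun k _ => by rw [hsy c k]; ring
      simp_rw [h1, hmul', Matrix.one_apply]
      simp
    rw [key i j l, key j l i, s13 l i j, s12 j i l]
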